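/- Assume all agents share a common acceptance function (w_i(r) = λ_r > 0 for all i and all r), and every agent's opinion is δ-coherent for some 0 < δ ≤ ε < 1. Then the indirect aggregation I produces an ε-coherent collective opinion: for every statement s, |v_{I(P)}(s) - e_{I(P)}(s)| ≤ (1/n)Σ_i Σ_{r∈R⁺(s)} [w_i(r)·|v_i(s_r) - e_i(s_r)|] / Σ_{r∈R⁺(s)} w_i(r) < δ ≤ ε. -/

import Mathlib

open scoped BigOperators

/-- A directed relational framework: statements `S`, relationships `R`,
each relationship has a set of source statements (`src r s` means `s` is a source of `r`)
and a destination statement `dst r`. -/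
structure DRF where
  S : Type
  R : Type
  [fintypeS : Fintype S]
  [fintypeR : Fintype R]
  [deceqS : DecidableEq S]
  src : R → S → Bool
  dst : R → S

attribute [instance] DRF.fintypeS DRF.fintypeR DRF.deceqS

/-- An opinion: a valuation on statements and an acceptance function on relationships. -/
structure Opinion (D : DRF) where
  v : D.S → ℝ
  w : D.R → ℝ

/-- The set `R⁺(s)` of relationships outgoing from `s`. -/
def DRF.Rplus (D : DRF) (s : D.S) : Finset D.R :=
  Finset.univ.filter (fun r => D.src r s = true)

/-- The estimation function: `v s` when there are no outgoing relationships or the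
acceptances sum to `0`, otherwise the `w`-weighted average of `v` over descendants. -/
noncomputable def est {D : DRF} (O : Opinion D) (s : D.S) : ℝ :=
  if (∑ r ∈ D.Rplus s, O.w r) = 0 then O.v s
  else (∑ r ∈ D.Rplus s, O.w r * O.v (D.dst r)) / (∑ r ∈ D.Rplus s, O.w r)

/-- ε-coherence of an opinion. -/
def Coherent {D : DRF} (ε : ℝ) (O : Opinion D) : Prop :=
  ∀ s : D.S, |O.v s - est O s| < ε

/-- An opinion profile for `n` agents. -/
abbrev Profile (D : DRF) (n : ℕ) := Fin n → Opinion D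

/-- Aggregated (direct) valuation: pointwise average. -/
noncomputable def directV {D : DRF} {n : ℕ} (P : Profile D n) (s : D.S) : ℝ :=
  (∑ i, (P i).v s) / n

/-- Aggregated acceptance: pointwise average. -/
noncomputable def directW {D : DRF} {n : ℕ} (P : Profile D n) (r : D.R) : ℝ :=
  (∑ i, (P i).w r) / n

/-- The direct aggregation function. -/
noncomputable def direct {D : DRF} {n : ℕ} (P : Profile D n) : Opinion D :=
  ⟨directV P, directW P⟩

/-- Aggregated (indirect) valuation: average of individual estimations. -/
noncomputable def indirectV {D : DRF} {n : ℕ} (P : Profile D n) (s : D.S) : ℝ :=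
  (∑ i, est (P i) s) / n

/-- The indirect aggregation function. -/
noncomputable def indirect {D : DRF} {n : ℕ} (P : Profile D n) : Opinion D :=
  ⟨indirectV P, directW P⟩

/-!
For a fixed acceptance function `λ`, the estimation is a linear operator `E` on valuations, and
when `λ ≥ 0` it is a weighted average, hence a contraction for the sup norm. With a common `λ`
the collective valuation is the average of the `E vᵢ`, so its incoherence `v_I - E v_I` is the
average of the `E (vᵢ - E vᵢ)`. Each of these lies in the open `δ`-ball because `E` contracts and
agent `i` is `δ`-coherent, and the ball is convex.
-/

section Estimation

variable {D : DRF}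

noncomputable def estLinearMap (w : D.R → ℝ) : (D.S → ℝ) →ₗ[ℝ] D.S → ℝ where
  toFun v s := est ⟨v, w⟩ s
  map_add' v v' := by
    funext s
    simp only [est, Pi.add_apply, mul_add, Finset.sum_add_distrib, add_div]
    split_ifs <;> rfl
  map_smul' c v := by
    funext s
    simp only [est, Pi.smul_apply, smul_eq_mul, RingHom.id_apply, mul_left_comm _ c,
      ← Finset.mul_sum, mul_div_assoc]
    split_ifs <;> rfl

theorem norm_estLinearMap_apply_le {w : D.R → ℝ} (hw : ∀ r, 0 ≤ w r) (v : D.S → ℝ) :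
    ‖estLinearMap w v‖ ≤ ‖v‖ := by
  refine (pi_norm_le_iff_of_nonneg (norm_nonneg v)).2 fun s => ?_
  change ‖est ⟨v, w⟩ s‖ ≤ ‖v‖
  unfold est
  split_ifs with hW
  · exact norm_le_pi_norm v s
  · have hWpos : 0 < ∑ r ∈ D.Rplus s, w r :=
      (Finset.sum_nonneg fun r _ => hw r).lt_of_ne' hW
    rw [norm_div, Real.norm_of_nonneg hWpos.le, div_le_iff₀ hWpos, Finset.mul_sum]
    calc ‖∑ r ∈ D.Rplus s, w r * v (D.dst r)‖
        ≤ ∑ r ∈ D.Rplus s, ‖w r * v (D.dst r)‖ := norm_sum_le _ _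
      _ ≤ ∑ r ∈ D.Rplus s, ‖v‖ * w r := Finset.sum_le_sum fun r _ => by
          rw [norm_mul, Real.norm_of_nonneg (hw r), mul_comm]
          exact mul_le_mul_of_nonneg_right (norm_le_pi_norm v _) (hw r)

theorem coherent_iff_norm_sub_lt {δ : ℝ} (hδ : 0 < δ) (O : Opinion D) :
    Coherent δ O ↔ ‖O.v - estLinearMap O.w O.v‖ < δ := by
  simp only [pi_norm_lt_iff hδ, Pi.sub_apply, Real.norm_eq_abs]
  rfl

theorem Coherent.mono {δ ε : ℝ} (hδε : δ ≤ ε) {O : Opinion D} (hO : Coherent δ O) :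
    Coherent ε O :=
  fun s => (hO s).trans_le hδε

end Estimation

section Aggregation

variable {D : DRF} {n : ℕ}

theorem directW_eq_of_forall_w_eq (hn : 0 < n) {P : Profile D n} {lam : D.R → ℝ}
    (h : ∀ i r, (P i).w r = lam r) : directW P = lam := by
  funext r
  have hn' : (n : ℝ) ≠ 0 := Nat.cast_ne_zero.2 hn.ne'
  simp only [directW, h, Finset.sum_const, Finset.card_univ, Fintype.card_fin, nsmul_eq_mul]
  field_simp

theorem indirectV_eq_smul_sum (P : Profile D n) :
    indirectV P = (n : ℝ)⁻¹ • ∑ i, estLinearMap (P i).w (P i).v := by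
  funext s
  simp only [indirectV, Pi.smul_apply, Finset.sum_apply, smul_eq_mul, div_eq_inv_mul]
  rfl

end Aggregation

theorem indirect_collective_coherence_common_acceptance_general
    (D : DRF) (n : ℕ) (hn : 0 < n) (P : Profile D n)
    (lam : D.R → ℝ) (hlam : ∀ r, 0 < lam r)
    (hcommon : ∀ i r, (P i).w r = lam r)
    (δ ε : ℝ) (hδ : 0 < δ) (hδε : δ ≤ ε)
    (hcoh : ∀ i, Coherent δ (P i)) :
    Coherent ε (indirect P) := by
  set E := estLinearMap lam
  have hw : ∀ i, (P i).w = lam := fun i => funext (hcommon i)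
  have hdev : ∀ i, E (P i).v - E (E (P i).v) ∈ Metric.ball 0 δ := fun i => by
    rw [mem_ball_zero_iff, ← map_sub]
    refine (norm_estLinearMap_apply_le (fun r => (hlam r).le) _).trans_lt ?_
    simpa [hw i] using (coherent_iff_norm_sub_lt hδ (P i)).1 (hcoh i)
  have hsplit : (indirect P).v - E (indirect P).v
      = ∑ i, (n : ℝ)⁻¹ • (E (P i).v - E (E (P i).v)) := by
    simp only [indirect, indirectV_eq_smul_sum, hw, map_smul, map_sum, ← Finset.smul_sum,
      ← smul_sub, ← Finset.sum_sub_distrib]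
    rfl
  refine Coherent.mono hδε ((coherent_iff_norm_sub_lt hδ _).2 ?_)
  rw [show (indirect P).w = lam from directW_eq_of_forall_w_eq hn hcommon, ← mem_ball_zero_iff,
    hsplit]
  refine (convex_ball 0 δ).sum_mem (fun _ _ => by positivity) ?_ fun i _ => hdev i
  simp [Finset.card_univ, (Nat.cast_pos.2 hn).ne']

/-- With a common positive acceptance function and δ-coherent individual opinions
(0 < δ ≤ ε < 1), the indirect aggregation produces an ε-coherent collective opinion. -/
theorem indirect_collective_coherence_common_acceptance
    (D : DRF) (n : ℕ) (hn : 0 < n) (P : Profile D n)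
    (lam : D.R → ℝ) (hlam : ∀ r, 0 < lam r)
    (hcommon : ∀ i r, (P i).w r = lam r)
    (δ ε : ℝ) (hδ : 0 < δ) (hδε : δ ≤ ε) (hε1 : ε < 1)
    (hcoh : ∀ i, Coherent δ (P i)) :
    Coherent ε (indirect P) :=
  indirect_collective_coherence_common_acceptance_general D n hn P lam hlam hcommon δ ε hδ hδε hcoh
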